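/- arXiv:1308.6392 — 4 statements merged into one kernel-verified Lean document; each statement's English description precedes it below -/
import Mathlib

section
/- For every fixed τ ∈ ℝ and ξ = (ξ₁,ξ₂) ∈ ℝ², the kernel K satisfies, at every (t,x) with t > τ and x = (x₁,x₂) ∈ ℝ², the adjoint partial differential equation −∂K/∂t − C₁·∂K/∂x₁ − C₂·∂K/∂x₂ + (1/2)·(σ₁²·∂²K/∂x₁² + σ₂²·∂²K/∂x₂²) − λ·K = 0 (all partial derivatives taken in the variables (t,x)). -/
/-!
Write `s = t - τ`. The kernel factors as `exp (β s) * U₁ (s, x₁) * U₂ (s, x₂)` with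
`Uᵢ (s, y) = exp (αᵢ (y - ξᵢ)) * Gᵢ (s, y)`, where `Gᵢ` is the difference of the Gaussian heat
kernels of variance `σᵢ² s` centred at `ξᵢ` and at `-ξᵢ` (method of images). Each `Gᵢ` solves the
heat equation `∂ₛG = (σᵢ²/2) ∂ᵧ²G`, and since `σᵢ² αᵢ = Cᵢ` the tilt by `exp (αᵢ y)` turns it into
a solution of `∂ₛU = (σᵢ²/2) ∂ᵧ²U - Cᵢ ∂ᵧU + Cᵢ²/(2σᵢ²) U`. Separating variables, the adjoint
operator maps the kernel to `-(β + λ + C₁²/(2σ₁²) + C₂²/(2σ₂²))` times itself, and `β` is chosen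
to make this factor vanish.
-/

open Real

/-- The kernel `K(t,x;τ,ξ)` from Theorem 3 of the paper:
`exp(β(t−τ) + α₁(x₁−ξ₁) + α₂(x₂−ξ₂)) · ∏ᵢ (2πσᵢ²(t−τ))^{−1/2} ·
  [exp(−(xᵢ−ξᵢ)²/(2σᵢ²(t−τ))) − exp(−(xᵢ+ξᵢ)²/(2σᵢ²(t−τ)))]`
with `αᵢ = Cᵢ/σᵢ²` and `β = −(λ + C₁²/(2σ₁²) + C₂²/(2σ₂²))`. -/
noncomputable def Kker (C₁ C₂ σ₁ σ₂ lam : ℝ) (t : ℝ) (x : ℝ × ℝ) (τ : ℝ) (ξ : ℝ × ℝ) : ℝ :=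
  Real.exp ((-(lam + C₁ ^ 2 / (2 * σ₁ ^ 2) + C₂ ^ 2 / (2 * σ₂ ^ 2))) * (t - τ)
      + (C₁ / σ₁ ^ 2) * (x.1 - ξ.1) + (C₂ / σ₂ ^ 2) * (x.2 - ξ.2))
    * ((Real.sqrt (2 * Real.pi * σ₁ ^ 2 * (t - τ)))⁻¹
        * (Real.exp (-(x.1 - ξ.1) ^ 2 / (2 * σ₁ ^ 2 * (t - τ)))
            - Real.exp (-(x.1 + ξ.1) ^ 2 / (2 * σ₁ ^ 2 * (t - τ)))))
    * ((Real.sqrt (2 * Real.pi * σ₂ ^ 2 * (t - τ)))⁻¹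
        * (Real.exp (-(x.2 - ξ.2) ^ 2 / (2 * σ₂ ^ 2 * (t - τ)))
            - Real.exp (-(x.2 + ξ.2) ^ 2 / (2 * σ₂ ^ 2 * (t - τ)))))

noncomputable def heatKernel (σ m s y : ℝ) : ℝ :=
  (√(2 * π * σ ^ 2 * s))⁻¹ * exp (-(y - m) ^ 2 / (2 * σ ^ 2 * s))

namespace heatKernel

variable (σ m s y : ℝ)

theorem hasDerivAt_space :
    HasDerivAt (heatKernel σ m s) (-(y - m) / (σ ^ 2 * s) * heatKernel σ m s y) y := by
  have h : HasDerivAt (fun y ↦ exp (-(y - m) ^ 2 / (2 * σ ^ 2 * s)))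
      (exp (-(y - m) ^ 2 / (2 * σ ^ 2 * s)) * (-(2 * (y - m) ^ 1 * 1) / (2 * σ ^ 2 * s))) y :=
    ((((hasDerivAt_id y).sub_const m).pow 2).neg.div_const _).exp
  refine (h.const_mul _).congr_deriv ?_
  unfold heatKernel
  ring

theorem deriv_space :
    deriv (heatKernel σ m s) = fun y ↦ -(y - m) / (σ ^ 2 * s) * heatKernel σ m s y :=
  funext fun y ↦ (hasDerivAt_space σ m s y).deriv

theorem hasDerivAt_deriv_space :
    HasDerivAt (deriv (heatKernel σ m s))
      (((y - m) ^ 2 / (σ ^ 2 * s) ^ 2 - 1 / (σ ^ 2 * s)) * heatKernel σ m s y) y := by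
  have h : HasDerivAt (fun y ↦ -(y - m) / (σ ^ 2 * s)) (-1 / (σ ^ 2 * s)) y :=
    ((hasDerivAt_id y).sub_const m).neg.div_const _
  rw [deriv_space]
  refine (h.mul (hasDerivAt_space σ m s y)).congr_deriv ?_
  ring

variable {σ s}

theorem hasDerivAt_time (hσ : σ ≠ 0) (hs : 0 < s) :
    HasDerivAt (fun s ↦ heatKernel σ m s y)
      (σ ^ 2 / 2 * (((y - m) ^ 2 / (σ ^ 2 * s) ^ 2 - 1 / (σ ^ 2 * s)) * heatKernel σ m s y))
      s := by
  have hvar : 0 < 2 * π * σ ^ 2 * s := by positivity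
  have hroot : HasDerivAt (fun s ↦ √(2 * π * σ ^ 2 * s))
      (2 * π * σ ^ 2 * 1 / (2 * √(2 * π * σ ^ 2 * s))) s :=
    ((hasDerivAt_id s).const_mul _).sqrt hvar.ne'
  have hexp : HasDerivAt (fun s ↦ exp (-(y - m) ^ 2 / (2 * σ ^ 2 * s)))
      (exp (-(y - m) ^ 2 / (2 * σ ^ 2 * s))
        * ((0 * (2 * σ ^ 2 * s) - -(y - m) ^ 2 * (2 * σ ^ 2 * 1)) / (2 * σ ^ 2 * s) ^ 2)) s :=
    ((hasDerivAt_const s _).fun_div ((hasDerivAt_id s).const_mul _) (by positivity)).exp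
  refine ((hroot.fun_inv (Real.sqrt_pos.2 hvar).ne').mul hexp).congr_deriv ?_
  have hsq : √(2 * π * σ ^ 2 * s) ^ 2 = 2 * π * σ ^ 2 * s := Real.sq_sqrt hvar.le
  have hroot_pos : 0 < √(2 * π * σ ^ 2 * s) := Real.sqrt_pos.2 hvar
  unfold heatKernel
  field_simp
  rw [hsq]
  ring

end heatKernel

theorem hasDerivAt_exp_mul {g : ℝ → ℝ} {g' α k y : ℝ} (hg : HasDerivAt g g' y) :
    HasDerivAt (fun y ↦ exp (α * (y - k)) * g y) (exp (α * (y - k)) * (α * g y + g')) y := by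
  have he : HasDerivAt (fun y ↦ exp (α * (y - k))) (exp (α * (y - k)) * (α * 1)) y :=
    (((hasDerivAt_id y).sub_const k).const_mul α).exp
  exact (he.mul hg).congr_deriv (by ring)

structure IsDiffusionSolutionAt (σ C a : ℝ) (u : ℝ → ℝ → ℝ) (s y : ℝ) : Prop where
  differentiableAt_time : DifferentiableAt ℝ (fun s ↦ u s y) s
  differentiable_space : Differentiable ℝ (u s)
  differentiableAt_deriv_space : DifferentiableAt ℝ (deriv (u s)) y
  deriv_time : deriv (fun s ↦ u s y) s
    = σ ^ 2 / 2 * deriv (deriv (u s)) y - C * deriv (u s) y + a * u s y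

namespace IsDiffusionSolutionAt

variable {σ C a s y : ℝ} {u v g : ℝ → ℝ → ℝ}

theorem sub (hu : IsDiffusionSolutionAt σ C a u s y) (hv : IsDiffusionSolutionAt σ C a v s y) :
    IsDiffusionSolutionAt σ C a (u - v) s y := by
  have hderiv : deriv (u s - v s) = deriv (u s) - deriv (v s) :=
    funext fun y ↦ deriv_sub (hu.differentiable_space y) (hv.differentiable_space y)
  refine ⟨hu.differentiableAt_time.sub hv.differentiableAt_time,
    hu.differentiable_space.sub hv.differentiable_space, ?_, ?_⟩
  · rw [Pi.sub_apply, hderiv]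
    exact hu.differentiableAt_deriv_space.sub hv.differentiableAt_deriv_space
  · show deriv (fun s ↦ u s y - v s y) s = _
    rw [deriv_fun_sub hu.differentiableAt_time hv.differentiableAt_time, hu.deriv_time,
      hv.deriv_time, Pi.sub_apply, hderiv,
      deriv_sub hu.differentiableAt_deriv_space hv.differentiableAt_deriv_space]
    simp only [Pi.sub_apply]
    ring

theorem exp_mul (hσ : σ ≠ 0) (C k : ℝ) (hg : IsDiffusionSolutionAt σ 0 0 g s y) :
    IsDiffusionSolutionAt σ C (C ^ 2 / (2 * σ ^ 2))
      (fun s y ↦ exp (C / σ ^ 2 * (y - k)) * g s y) s y := by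
  have hderiv : deriv (fun y ↦ exp (C / σ ^ 2 * (y - k)) * g s y)
      = fun y ↦ exp (C / σ ^ 2 * (y - k)) * (C / σ ^ 2 * g s y + deriv (g s) y) :=
    funext fun y ↦ (hasDerivAt_exp_mul (hg.differentiable_space y).hasDerivAt).deriv
  have hderiv₂ : HasDerivAt
      (fun y ↦ exp (C / σ ^ 2 * (y - k)) * (C / σ ^ 2 * g s y + deriv (g s) y))
      (exp (C / σ ^ 2 * (y - k)) * (C / σ ^ 2 * (C / σ ^ 2 * g s y + deriv (g s) y)
        + (C / σ ^ 2 * deriv (g s) y + deriv (deriv (g s)) y))) y :=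
    hasDerivAt_exp_mul (((hg.differentiable_space y).hasDerivAt.const_mul _).add
      hg.differentiableAt_deriv_space.hasDerivAt)
  refine ⟨hg.differentiableAt_time.const_mul _,
    fun y ↦ (hasDerivAt_exp_mul (hg.differentiable_space y).hasDerivAt).differentiableAt, ?_, ?_⟩
  · rw [hderiv]
    exact hderiv₂.differentiableAt
  · rw [deriv_const_mul_field, hg.deriv_time, hderiv, hderiv₂.deriv]
    field_simp
    ring

end IsDiffusionSolutionAt

theorem isDiffusionSolutionAt_heatKernel {σ s : ℝ} (hσ : σ ≠ 0) (m : ℝ) (hs : 0 < s) (y : ℝ) :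
    IsDiffusionSolutionAt σ 0 0 (heatKernel σ m) s y where
  differentiableAt_time := (heatKernel.hasDerivAt_time m y hσ hs).differentiableAt
  differentiable_space y := (heatKernel.hasDerivAt_space σ m s y).differentiableAt
  differentiableAt_deriv_space := (heatKernel.hasDerivAt_deriv_space σ m s y).differentiableAt
  deriv_time := by
    rw [(heatKernel.hasDerivAt_time m y hσ hs).deriv,
      (heatKernel.hasDerivAt_deriv_space σ m s y).deriv]
    ring

noncomputable def dirichletHeatKernel (σ a : ℝ) : ℝ → ℝ → ℝ :=
  heatKernel σ a - heatKernel σ (-a)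

theorem isDiffusionSolutionAt_dirichletHeatKernel {σ s : ℝ} (hσ : σ ≠ 0) (a : ℝ) (hs : 0 < s)
    (y : ℝ) : IsDiffusionSolutionAt σ 0 0 (dirichletHeatKernel σ a) s y :=
  (isDiffusionSolutionAt_heatKernel hσ a hs y).sub (isDiffusionSolutionAt_heatKernel hσ (-a) hs y)

noncomputable def adjointOperator (C₁ C₂ σ₁ σ₂ lam : ℝ) (F : ℝ → ℝ × ℝ → ℝ) (t : ℝ)
    (x : ℝ × ℝ) : ℝ :=
  -(deriv (fun s ↦ F s x) t)
    - C₁ * deriv (fun y ↦ F t (y, x.2)) x.1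
    - C₂ * deriv (fun y ↦ F t (x.1, y)) x.2
    + (1 / 2) * (σ₁ ^ 2 * deriv (deriv (fun y ↦ F t (y, x.2))) x.1
        + σ₂ ^ 2 * deriv (deriv (fun y ↦ F t (x.1, y))) x.2)
    - lam * F t x

theorem adjointOperator_of_separated {C₁ C₂ σ₁ σ₂ a₁ a₂ b τ t : ℝ} (lam : ℝ) {x : ℝ × ℝ}
    {U₁ U₂ : ℝ → ℝ → ℝ} {F : ℝ → ℝ × ℝ → ℝ}
    (hF : ∀ t x, F t x = exp (b * (t - τ)) * U₁ (t - τ) x.1 * U₂ (t - τ) x.2)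
    (h₁ : IsDiffusionSolutionAt σ₁ C₁ a₁ U₁ (t - τ) x.1)
    (h₂ : IsDiffusionSolutionAt σ₂ C₂ a₂ U₂ (t - τ) x.2) :
    adjointOperator C₁ C₂ σ₁ σ₂ lam F t x = -(b + lam + a₁ + a₂) * F t x := by
  have hexp : HasDerivAt (fun s ↦ exp (b * (s - τ))) (exp (b * (t - τ)) * (b * 1)) t :=
    (((hasDerivAt_id t).sub_const τ).const_mul b).exp
  have hU₁ := h₁.differentiableAt_time.hasDerivAt.comp_sub_const t τ
  have hU₂ := h₂.differentiableAt_time.hasDerivAt.comp_sub_const t τ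
  simp only [adjointOperator, hF, deriv_mul_const_field', deriv_const_mul_field',
    ((hexp.fun_mul hU₁).fun_mul hU₂).deriv]
  rw [h₁.deriv_time, h₂.deriv_time]
  ring

theorem Kker_eq (C₁ C₂ σ₁ σ₂ lam t : ℝ) (x : ℝ × ℝ) (τ : ℝ) (ξ : ℝ × ℝ) :
    Kker C₁ C₂ σ₁ σ₂ lam t x τ ξ =
      exp (-(lam + C₁ ^ 2 / (2 * σ₁ ^ 2) + C₂ ^ 2 / (2 * σ₂ ^ 2)) * (t - τ))
        * (exp (C₁ / σ₁ ^ 2 * (x.1 - ξ.1)) * dirichletHeatKernel σ₁ ξ.1 (t - τ) x.1)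
        * (exp (C₂ / σ₂ ^ 2 * (x.2 - ξ.2)) * dirichletHeatKernel σ₂ ξ.2 (t - τ) x.2) := by
  simp only [Kker, dirichletHeatKernel, heatKernel, Pi.sub_apply, sub_neg_eq_add, exp_add]
  ring

theorem kernel_satisfies_adjoint_pde_general
    (C₁ C₂ σ₁ σ₂ lam : ℝ) (hσ₁ : 0 < σ₁) (hσ₂ : 0 < σ₂)
    (τ : ℝ) (ξ : ℝ × ℝ) (t : ℝ) (ht : τ < t) (x : ℝ × ℝ) :
    -(deriv (fun s : ℝ => Kker C₁ C₂ σ₁ σ₂ lam s x τ ξ) t)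
      - C₁ * deriv (fun y : ℝ => Kker C₁ C₂ σ₁ σ₂ lam t (y, x.2) τ ξ) x.1
      - C₂ * deriv (fun y : ℝ => Kker C₁ C₂ σ₁ σ₂ lam t (x.1, y) τ ξ) x.2
      + (1 / 2) * (σ₁ ^ 2 * deriv (deriv (fun y : ℝ => Kker C₁ C₂ σ₁ σ₂ lam t (y, x.2) τ ξ)) x.1
          + σ₂ ^ 2 * deriv (deriv (fun y : ℝ => Kker C₁ C₂ σ₁ σ₂ lam t (x.1, y) τ ξ)) x.2)
      - lam * Kker C₁ C₂ σ₁ σ₂ lam t x τ ξ = 0 := by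
  have hs : 0 < t - τ := sub_pos.2 ht
  have h₁ := (isDiffusionSolutionAt_dirichletHeatKernel hσ₁.ne' ξ.1 hs x.1).exp_mul hσ₁.ne' C₁ ξ.1
  have h₂ := (isDiffusionSolutionAt_dirichletHeatKernel hσ₂.ne' ξ.2 hs x.2).exp_mul hσ₂.ne' C₂ ξ.2
  have h := adjointOperator_of_separated lam (F := fun t x ↦ Kker C₁ C₂ σ₁ σ₂ lam t x τ ξ)
    (Kker_eq C₁ C₂ σ₁ σ₂ lam · · τ ξ) h₁ h₂
  rw [adjointOperator] at h
  rw [h]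
  ring

/-- For every fixed `τ` and `ξ`, the kernel `K` satisfies the adjoint PDE
`−∂K/∂t − C₁ ∂K/∂x₁ − C₂ ∂K/∂x₂ + ½(σ₁² ∂²K/∂x₁² + σ₂² ∂²K/∂x₂²) − λ K = 0`
at every `(t,x)` with `t > τ`. -/
theorem kernel_satisfies_adjoint_pde
    (C₁ C₂ σ₁ σ₂ lam : ℝ) (hσ₁ : 0 < σ₁) (hσ₂ : 0 < σ₂) (hlam : 0 ≤ lam)
    (τ : ℝ) (ξ : ℝ × ℝ) (t : ℝ) (ht : τ < t) (x : ℝ × ℝ) :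
    -(deriv (fun s : ℝ => Kker C₁ C₂ σ₁ σ₂ lam s x τ ξ) t)
      - C₁ * deriv (fun y : ℝ => Kker C₁ C₂ σ₁ σ₂ lam t (y, x.2) τ ξ) x.1
      - C₂ * deriv (fun y : ℝ => Kker C₁ C₂ σ₁ σ₂ lam t (x.1, y) τ ξ) x.2
      + (1 / 2) * (σ₁ ^ 2 * deriv (deriv (fun y : ℝ => Kker C₁ C₂ σ₁ σ₂ lam t (y, x.2) τ ξ)) x.1
          + σ₂ ^ 2 * deriv (deriv (fun y : ℝ => Kker C₁ C₂ σ₁ σ₂ lam t (x.1, y) τ ξ)) x.2)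
      - lam * Kker C₁ C₂ σ₁ σ₂ lam t x τ ξ = 0 :=
  kernel_satisfies_adjoint_pde_general C₁ C₂ σ₁ σ₂ lam hσ₁ hσ₂ τ ξ t ht x
end

section
/- The kernel K reproduces the Dirac initial condition in the weak sense: for every fixed τ ∈ ℝ, every point ξ = (ξ₁,ξ₂) with ξ₁ > 0 and ξ₂ > 0, and every bounded continuous function f : ℝ² → ℝ, the integral ∫_{[0,∞)×[0,∞)} K(t,x;τ,ξ) f(x) dx converges to f(ξ) as t → τ from the right. -/
open Real MeasureTheory Filter

open ProbabilityTheory Topology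
open scoped NNReal

/-!
Completing the square in the exponent shows that each one-dimensional factor of `K` is the
method-of-images density `N(ξᵢ + Cᵢ s, σᵢ² s) - exp(-2 Cᵢ ξᵢ / σᵢ²) N(-ξᵢ + Cᵢ s, σᵢ² s)`,
`s = t - τ`, and `K` is `exp(-λ s)` times the product of the two factors. Integrating
`g = 1_{[0,∞)²} f` against `K` therefore gives a signed combination of four integrals of `g`
against product Gaussians centred near `ξ` and its three reflections in the coordinate axes.
As `s → 0⁺` these Gaussians concentrate at their centres (they are affine images of a standard
Gaussian, so dominated convergence applies), hence the first integral tends to `g ξ = f ξ` and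
the other three tend to `0`, because `g` vanishes near the reflected points.
-/

theorem tendsto_integral_comp_of_continuousAt {ι Ω E G : Type*} [MeasurableSpace Ω]
    [TopologicalSpace E] [NormedAddCommGroup G] [NormedSpace ℝ G] [CompleteSpace G]
    {P : Measure Ω} [IsProbabilityMeasure P] {l : Filter ι} [l.IsCountablyGenerated]
    {X : ι → Ω → E} {p : E} {g : E → G} {M : ℝ}
    (hmeas : ∀ i, AEStronglyMeasurable (fun ω ↦ g (X i ω)) P) (hgM : ∀ x, ‖g x‖ ≤ M)
    (hgp : ContinuousAt g p) (hX : ∀ ω, Tendsto (fun i ↦ X i ω) l (𝓝 p)) :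
    Tendsto (fun i ↦ ∫ ω, g (X i ω) ∂P) l (𝓝 (g p)) := by
  simpa using tendsto_integral_filter_of_norm_le_const (f := fun _ ↦ g p)
    (Eventually.of_forall hmeas) ⟨M, Eventually.of_forall fun i ↦ ae_of_all _ fun ω ↦ hgM _⟩
    (ae_of_all _ fun ω ↦ hgp.tendsto.comp (hX ω))

theorem gaussianReal_eq_map_standard (m : ℝ) (v : ℝ≥0) :
    gaussianReal m v = (gaussianReal 0 1).map (fun z ↦ m + √v * z) := by
  have h : (fun z : ℝ ↦ m + √v * z) = (m + ·) ∘ (√v * ·) := rfl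
  rw [h, ← Measure.map_map (by fun_prop) (by fun_prop), gaussianReal_map_const_mul,
    gaussianReal_map_const_add]
  congr 1
  · ring
  · ext; simp

theorem tendsto_integral_gaussianReal_prod {ι G : Type*} [NormedAddCommGroup G] [NormedSpace ℝ G]
    [CompleteSpace G] {l : Filter ι} [l.IsCountablyGenerated] {m₁ m₂ : ι → ℝ} {v₁ v₂ : ι → ℝ≥0}
    {p : ℝ × ℝ}
    (hm₁ : Tendsto m₁ l (𝓝 p.1)) (hm₂ : Tendsto m₂ l (𝓝 p.2)) (hv₁ : Tendsto v₁ l (𝓝 0))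
    (hv₂ : Tendsto v₂ l (𝓝 0)) {g : ℝ × ℝ → G} {M : ℝ} (hg : StronglyMeasurable g)
    (hgM : ∀ x, ‖g x‖ ≤ M) (hgp : ContinuousAt g p) :
    Tendsto (fun i ↦ ∫ x, g x ∂(gaussianReal (m₁ i) (v₁ i)).prod (gaussianReal (m₂ i) (v₂ i)))
      l (𝓝 (g p)) := by
  have hcentre : ∀ {m : ι → ℝ} {v : ι → ℝ≥0} {a : ℝ}, Tendsto m l (𝓝 a) → Tendsto v l (𝓝 0) →
      ∀ y : ℝ, Tendsto (fun i ↦ m i + √(v i) * y) l (𝓝 a) := fun hm hv y ↦ by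
    simpa using hm.add ((NNReal.continuous_coe.tendsto 0 |>.comp hv |>.sqrt).mul_const y)
  let X : ι → ℝ × ℝ → ℝ × ℝ := fun i z ↦ (m₁ i + √(v₁ i) * z.1, m₂ i + √(v₂ i) * z.2)
  have hX : ∀ i, Measurable (X i) := fun i ↦ by fun_prop
  have hlaw : ∀ i, (gaussianReal (m₁ i) (v₁ i)).prod (gaussianReal (m₂ i) (v₂ i))
      = ((gaussianReal 0 1).prod (gaussianReal 0 1)).map (X i) := fun i ↦ by
    rw [gaussianReal_eq_map_standard (m₁ i), gaussianReal_eq_map_standard (m₂ i),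
      Measure.map_prod_map _ _ (by fun_prop) (by fun_prop)]
    rfl
  simp_rw [hlaw, integral_map (hX _).aemeasurable hg.aestronglyMeasurable]
  exact tendsto_integral_comp_of_continuousAt
    (fun i ↦ (hg.comp_measurable (hX i)).aestronglyMeasurable) hgM hgp
    fun z ↦ (hcentre hm₁ hv₁ z.1).prodMk_nhds (hcentre hm₂ hv₂ z.2)

theorem integral_gaussianReal_prod {m₁ m₂ : ℝ} {v₁ v₂ : ℝ≥0} (hv₁ : v₁ ≠ 0) (hv₂ : v₂ ≠ 0)
    (g : ℝ × ℝ → ℝ) :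
    ∫ x, g x ∂(gaussianReal m₁ v₁).prod (gaussianReal m₂ v₂)
      = ∫ x, gaussianPDFReal m₁ v₁ x.1 * gaussianPDFReal m₂ v₂ x.2 * g x := by
  rw [gaussianReal_of_var_ne_zero _ hv₁, gaussianReal_of_var_ne_zero _ hv₂,
    prod_withDensity (measurable_gaussianPDF _ _) (measurable_gaussianPDF _ _),
    integral_withDensity_eq_integral_toReal_smul (by fun_prop)
      (ae_of_all _ fun _ ↦ ENNReal.mul_lt_top gaussianPDF_lt_top gaussianPDF_lt_top),
    Measure.volume_eq_prod]
  simp only [ENNReal.toReal_mul, toReal_gaussianPDF, smul_eq_mul]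

theorem integral_sub_mul_sub_gaussianPDFReal {a₁ b₁ a₂ b₂ : ℝ} {v₁ v₂ : ℝ≥0} (hv₁ : v₁ ≠ 0)
    (hv₂ : v₂ ≠ 0) (c₁ c₂ : ℝ) {g : ℝ × ℝ → ℝ} {M : ℝ} (hg : Measurable g)
    (hgM : ∀ x, |g x| ≤ M) :
    ∫ x, (gaussianPDFReal a₁ v₁ x.1 - c₁ * gaussianPDFReal b₁ v₁ x.1)
        * (gaussianPDFReal a₂ v₂ x.2 - c₂ * gaussianPDFReal b₂ v₂ x.2) * g x
      = ∫ x, g x ∂(gaussianReal a₁ v₁).prod (gaussianReal a₂ v₂)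
        - c₂ * ∫ x, g x ∂(gaussianReal a₁ v₁).prod (gaussianReal b₂ v₂)
        - c₁ * ∫ x, g x ∂(gaussianReal b₁ v₁).prod (gaussianReal a₂ v₂)
        + c₁ * c₂ * ∫ x, g x ∂(gaussianReal b₁ v₁).prod (gaussianReal b₂ v₂) := by
  have hint : ∀ m₁ m₂, Integrable
      (fun x : ℝ × ℝ ↦ gaussianPDFReal m₁ v₁ x.1 * gaussianPDFReal m₂ v₂ x.2 * g x) :=
    fun m₁ m₂ ↦ ((integrable_gaussianPDFReal m₁ v₁).mul_prod
      (integrable_gaussianPDFReal m₂ v₂)).mul_bdd hg.aestronglyMeasurable (ae_of_all _ hgM)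
  have hexpand : (fun x : ℝ × ℝ ↦ (gaussianPDFReal a₁ v₁ x.1 - c₁ * gaussianPDFReal b₁ v₁ x.1)
      * (gaussianPDFReal a₂ v₂ x.2 - c₂ * gaussianPDFReal b₂ v₂ x.2) * g x)
      = fun x ↦ gaussianPDFReal a₁ v₁ x.1 * gaussianPDFReal a₂ v₂ x.2 * g x
        - c₂ * (gaussianPDFReal a₁ v₁ x.1 * gaussianPDFReal b₂ v₂ x.2 * g x)
        - c₁ * (gaussianPDFReal b₁ v₁ x.1 * gaussianPDFReal a₂ v₂ x.2 * g x)
        + c₁ * c₂ * (gaussianPDFReal b₁ v₁ x.1 * gaussianPDFReal b₂ v₂ x.2 * g x) := by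
    ext x; ring
  rw [hexpand, integral_add, integral_sub, integral_sub]
  · simp only [integral_const_mul, integral_gaussianReal_prod hv₁ hv₂]
  all_goals fun_prop

/-- Method of images: the density at time `s` of `ξ + C s + σ B_s`, `B` a standard Brownian
motion, killed when it leaves `(0, ∞)`. -/
noncomputable def imageKernel (C σ s ξ x : ℝ) : ℝ :=
  gaussianPDFReal (ξ + C * s) (σ ^ 2 * s).toNNReal x
    - exp (-2 * C * ξ / σ ^ 2) * gaussianPDFReal (-ξ + C * s) (σ ^ 2 * s).toNNReal x

theorem imageKernel_eq {C σ s : ℝ} (hσ : σ ≠ 0) (hs : 0 < s) (ξ x : ℝ) :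
    imageKernel C σ s ξ x = exp (-(C ^ 2 / (2 * σ ^ 2)) * s + C / σ ^ 2 * (x - ξ))
      * ((√(2 * π * σ ^ 2 * s))⁻¹
        * (exp (-(x - ξ) ^ 2 / (2 * σ ^ 2 * s)) - exp (-(x + ξ) ^ 2 / (2 * σ ^ 2 * s)))) := by
  have hv : ((σ ^ 2 * s).toNNReal : ℝ) = σ ^ 2 * s := Real.coe_toNNReal _ (by positivity)
  have h₁ : exp (-(C ^ 2 / (2 * σ ^ 2)) * s + C / σ ^ 2 * (x - ξ))
      * exp (-(x - ξ) ^ 2 / (2 * σ ^ 2 * s))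
      = exp (-(x - (ξ + C * s)) ^ 2 / (2 * (σ ^ 2 * s))) := by
    rw [← exp_add]; congr 1; field_simp; ring
  have h₂ : exp (-(C ^ 2 / (2 * σ ^ 2)) * s + C / σ ^ 2 * (x - ξ))
      * exp (-(x + ξ) ^ 2 / (2 * σ ^ 2 * s))
      = exp (-2 * C * ξ / σ ^ 2) * exp (-(x - (-ξ + C * s)) ^ 2 / (2 * (σ ^ 2 * s))) := by
    rw [← exp_add, ← exp_add]; congr 1; field_simp; ring
  rw [imageKernel, gaussianPDFReal, gaussianPDFReal, hv,
    show 2 * π * (σ ^ 2 * s) = 2 * π * σ ^ 2 * s by ring]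
  linear_combination (√(2 * π * σ ^ 2 * s))⁻¹ * (h₂ - h₁)

theorem Kker_eq_exp_mul_imageKernel {C₁ C₂ σ₁ σ₂ : ℝ} (hσ₁ : σ₁ ≠ 0) (hσ₂ : σ₂ ≠ 0) (lam : ℝ)
    {t τ : ℝ} (ht : τ < t) (x ξ : ℝ × ℝ) :
    Kker C₁ C₂ σ₁ σ₂ lam t x τ ξ = exp (-lam * (t - τ))
      * imageKernel C₁ σ₁ (t - τ) ξ.1 x.1 * imageKernel C₂ σ₂ (t - τ) ξ.2 x.2 := by
  rw [imageKernel_eq hσ₁ (sub_pos.2 ht), imageKernel_eq hσ₂ (sub_pos.2 ht), Kker,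
    show ∀ a b c d : ℝ, -(lam + a + b) * (t - τ) + c + d
      = -lam * (t - τ) + (-a * (t - τ) + c) + (-b * (t - τ) + d) from fun _ _ _ _ ↦ by ring,
    exp_add, exp_add]
  ring

theorem setIntegral_Kker_mul {C₁ C₂ σ₁ σ₂ : ℝ} (hσ₁ : σ₁ ≠ 0) (hσ₂ : σ₂ ≠ 0) (lam : ℝ)
    {t τ : ℝ} (ht : τ < t) (ξ : ℝ × ℝ) {Q : Set (ℝ × ℝ)} (hQ : MeasurableSet Q) (f : ℝ × ℝ → ℝ) :
    ∫ x in Q, Kker C₁ C₂ σ₁ σ₂ lam t x τ ξ * f x = exp (-lam * (t - τ)) * ∫ x,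
      imageKernel C₁ σ₁ (t - τ) ξ.1 x.1 * imageKernel C₂ σ₂ (t - τ) ξ.2 x.2 * Q.indicator f x := by
  rw [← integral_indicator hQ, ← integral_const_mul]
  congr 1 with x
  rw [Set.indicator_mul_right, Kker_eq_exp_mul_imageKernel hσ₁ hσ₂ lam ht]
  ring

noncomputable def driftedGaussian (C σ s m : ℝ) : Measure ℝ :=
  gaussianReal (m + C * s) (σ ^ 2 * s).toNNReal

noncomputable def driftHeatFlow (C₁ C₂ σ₁ σ₂ s : ℝ) (g : ℝ × ℝ → ℝ) (p : ℝ × ℝ) : ℝ :=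
  ∫ x, g x ∂(driftedGaussian C₁ σ₁ s p.1).prod (driftedGaussian C₂ σ₂ s p.2)

theorem tendsto_driftHeatFlow (C₁ C₂ σ₁ σ₂ : ℝ) {g : ℝ × ℝ → ℝ} {M : ℝ} (hg : Measurable g)
    (hgM : ∀ x, |g x| ≤ M) {p : ℝ × ℝ} (hgp : ContinuousAt g p) :
    Tendsto (fun s ↦ driftHeatFlow C₁ C₂ σ₁ σ₂ s g p) (𝓝 0) (𝓝 (g p)) := by
  have hmean : ∀ C m : ℝ, Tendsto (fun s ↦ m + C * s) (𝓝 0) (𝓝 m) := fun C m ↦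
    (continuous_const.add (continuous_const.mul continuous_id)).tendsto' 0 m (by simp)
  have hvar : ∀ σ : ℝ, Tendsto (fun s ↦ (σ ^ 2 * s).toNNReal) (𝓝 0) (𝓝 0) := fun σ ↦
    (continuous_real_toNNReal.comp (continuous_const.mul continuous_id)).tendsto' 0 0 (by simp)
  exact tendsto_integral_gaussianReal_prod (hmean C₁ p.1) (hmean C₂ p.2) (hvar σ₁) (hvar σ₂)
    hg.stronglyMeasurable hgM hgp

theorem integral_imageKernel_mul {C₁ C₂ σ₁ σ₂ s : ℝ} (hσ₁ : σ₁ ≠ 0) (hσ₂ : σ₂ ≠ 0) (hs : 0 < s)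
    (ξ : ℝ × ℝ) {g : ℝ × ℝ → ℝ} {M : ℝ} (hg : Measurable g) (hgM : ∀ x, |g x| ≤ M) :
    ∫ x, imageKernel C₁ σ₁ s ξ.1 x.1 * imageKernel C₂ σ₂ s ξ.2 x.2 * g x
      = driftHeatFlow C₁ C₂ σ₁ σ₂ s g ξ
        - exp (-2 * C₂ * ξ.2 / σ₂ ^ 2) * driftHeatFlow C₁ C₂ σ₁ σ₂ s g (ξ.1, -ξ.2)
        - exp (-2 * C₁ * ξ.1 / σ₁ ^ 2) * driftHeatFlow C₁ C₂ σ₁ σ₂ s g (-ξ.1, ξ.2)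
        + exp (-2 * C₁ * ξ.1 / σ₁ ^ 2) * exp (-2 * C₂ * ξ.2 / σ₂ ^ 2)
          * driftHeatFlow C₁ C₂ σ₁ σ₂ s g (-ξ.1, -ξ.2) := by
  have hv : ∀ {σ : ℝ}, σ ≠ 0 → (σ ^ 2 * s).toNNReal ≠ 0 := fun hσ ↦
    (Real.toNNReal_pos.2 (by positivity)).ne'
  exact integral_sub_mul_sub_gaussianPDFReal (hv hσ₁) (hv hσ₂) _ _ hg hgM

theorem tendsto_integral_imageKernel_mul (C₁ C₂ : ℝ) {σ₁ σ₂ : ℝ} (hσ₁ : σ₁ ≠ 0) (hσ₂ : σ₂ ≠ 0)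
    {ξ : ℝ × ℝ} {g : ℝ × ℝ → ℝ} {M : ℝ} (hg : Measurable g) (hgM : ∀ x, |g x| ≤ M)
    (hgξ : ContinuousAt g ξ) (h₁ : g =ᶠ[𝓝 (ξ.1, -ξ.2)] 0) (h₂ : g =ᶠ[𝓝 (-ξ.1, ξ.2)] 0)
    (h₁₂ : g =ᶠ[𝓝 (-ξ.1, -ξ.2)] 0) :
    Tendsto (fun s ↦ ∫ x, imageKernel C₁ σ₁ s ξ.1 x.1 * imageKernel C₂ σ₂ s ξ.2 x.2 * g x)
      (𝓝[>] 0) (𝓝 (g ξ)) := by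
  have hP : ∀ {p}, ContinuousAt g p →
      Tendsto (fun s ↦ driftHeatFlow C₁ C₂ σ₁ σ₂ s g p) (𝓝[>] 0) (𝓝 (g p)) := fun hp ↦
    (tendsto_driftHeatFlow C₁ C₂ σ₁ σ₂ hg hgM hp).mono_left nhdsWithin_le_nhds
  have hP₀ : ∀ {p}, g =ᶠ[𝓝 p] 0 →
      Tendsto (fun s ↦ driftHeatFlow C₁ C₂ σ₁ σ₂ s g p) (𝓝[>] 0) (𝓝 0) := fun hp ↦ by
    simpa [hp.eq_of_nhds] using hP (continuousAt_const.congr hp.symm)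
  have := (((hP hgξ).sub ((hP₀ h₁).const_mul (exp (-2 * C₂ * ξ.2 / σ₂ ^ 2)))).sub
    ((hP₀ h₂).const_mul (exp (-2 * C₁ * ξ.1 / σ₁ ^ 2)))).add
    ((hP₀ h₁₂).const_mul (exp (-2 * C₁ * ξ.1 / σ₁ ^ 2) * exp (-2 * C₂ * ξ.2 / σ₂ ^ 2)))
  simp only [mul_zero, sub_zero, add_zero] at this
  refine this.congr' ?_
  filter_upwards [self_mem_nhdsWithin] with s hs
  exact (integral_imageKernel_mul hσ₁ hσ₂ hs ξ hg hgM).symm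

theorem kernel_dirac_initial_condition_general
    (C₁ C₂ σ₁ σ₂ lam : ℝ) (hσ₁ : 0 < σ₁) (hσ₂ : 0 < σ₂)
    (τ : ℝ) (ξ : ℝ × ℝ) (hξ₁ : 0 < ξ.1) (hξ₂ : 0 < ξ.2)
    (f : ℝ × ℝ → ℝ) (hf : Continuous f) (hfb : ∃ M : ℝ, ∀ x, |f x| ≤ M) :
    Tendsto (fun t : ℝ =>
        ∫ x in Set.Ici (0 : ℝ) ×ˢ Set.Ici (0 : ℝ), Kker C₁ C₂ σ₁ σ₂ lam t x τ ξ * f x)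
      (nhdsWithin τ (Set.Ioi τ)) (nhds (f ξ)) := by
  obtain ⟨M, hM⟩ := hfb
  set Q := Set.Ici (0 : ℝ) ×ˢ Set.Ici (0 : ℝ)
  have hQ : IsClosed Q := isClosed_Ici.prod isClosed_Ici
  have hξQ : Q ∈ 𝓝 ξ := prod_mem_nhds (Ici_mem_nhds hξ₁) (Ici_mem_nhds hξ₂)
  have hout : ∀ p ∉ Q, Q.indicator f =ᶠ[𝓝 p] 0 := fun p hp ↦
    Filter.mem_of_superset (hQ.compl_mem_nhds hp) fun x hx ↦ Set.indicator_of_notMem hx f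
  have hlim := tendsto_integral_imageKernel_mul C₁ C₂ hσ₁.ne' hσ₂.ne'
    (hf.measurable.indicator hQ.measurableSet)
    (fun x ↦ (norm_indicator_le_norm_self f x).trans (hM x))
    (hf.continuousAt.congr (Filter.mem_of_superset hξQ fun x hx ↦ (Set.indicator_of_mem hx f).symm))
    (hout _ fun h ↦ by linarith [h.2.out]) (hout _ fun h ↦ by linarith [h.1.out])
    (hout _ fun h ↦ by linarith [h.1.out])
  rw [Set.indicator_of_mem (mem_of_mem_nhds hξQ)] at hlim
  have hexp : Tendsto (fun s ↦ exp (-lam * s)) (𝓝[>] 0) (𝓝 1) :=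
    ((continuous_const.mul continuous_id).rexp.tendsto' 0 1 (by simp)).mono_left nhdsWithin_le_nhds
  have hshift : Tendsto (fun t ↦ t - τ) (𝓝[>] τ) (𝓝[>] 0) :=
    tendsto_nhdsWithin_of_tendsto_nhds_of_eventually_within _
      (((continuous_sub_right τ).tendsto' τ 0 (sub_self τ)).mono_left nhdsWithin_le_nhds)
      (eventually_mem_nhdsWithin.mono fun t (ht : τ < t) ↦ show 0 < t - τ from sub_pos.2 ht)
  rw [← one_mul (f ξ)]
  refine ((hexp.mul hlim).comp hshift).congr' ?_
  filter_upwards [self_mem_nhdsWithin] with t ht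
  exact (setIntegral_Kker_mul hσ₁.ne' hσ₂.ne' lam ht ξ hQ.measurableSet f).symm

/-- The kernel `K` reproduces the Dirac initial condition in the weak sense: for fixed `τ`,
`ξ` interior to the positive quadrant and any bounded continuous `f : ℝ² → ℝ`,
`∫_{[0,∞)²} K(t,x;τ,ξ) f(x) dx → f(ξ)` as `t → τ⁺`. -/
theorem kernel_dirac_initial_condition
    (C₁ C₂ σ₁ σ₂ lam : ℝ) (hσ₁ : 0 < σ₁) (hσ₂ : 0 < σ₂) (hlam : 0 ≤ lam)
    (τ : ℝ) (ξ : ℝ × ℝ) (hξ₁ : 0 < ξ.1) (hξ₂ : 0 < ξ.2)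
    (f : ℝ × ℝ → ℝ) (hf : Continuous f) (hfb : ∃ M : ℝ, ∀ x, |f x| ≤ M) :
    Tendsto (fun t : ℝ =>
        ∫ x in Set.Ici (0 : ℝ) ×ˢ Set.Ici (0 : ℝ), Kker C₁ C₂ σ₁ σ₂ lam t x τ ξ * f x)
      (nhdsWithin τ (Set.Ioi τ)) (nhds (f ξ)) :=
  kernel_dirac_initial_condition_general C₁ C₂ σ₁ σ₂ lam hσ₁ hσ₂ τ ξ hξ₁ hξ₂ f hf hfb
end

section
/- The kernel K is a nonnegative sub-stochastic kernel on the positive quadrant: for all τ < t and all ξ = (ξ₁,ξ₂) ∈ [0,∞)², one has K(t,x;τ,ξ) ≥ 0 for every x ∈ [0,∞)², and ∫_{[0,∞)×[0,∞)} K(t,x;τ,ξ) dx ≤ exp(−λ(t−τ)) ≤ 1. -/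
/-!
After the factor `exp (-λ (t - τ))` is split off, `K` is a product of two one-dimensional
kernels, each the Girsanov factor of a drift times the method-of-images difference of two
Gaussian densities. Completing the square turns each into `g₊ - c g₋` with `g±` Gaussian
densities and `c > 0`, so its integral over `[0, ∞)` is at most `∫ g₊ = 1`. Nonnegativity on
the quadrant is `(x - ξ)² ≤ (x + ξ)²` for `x, ξ ≥ 0`.
-/

open Real MeasureTheory

open ProbabilityTheory NNReal

lemma gaussianPDFReal_tilt (α m : ℝ) (v : ℝ≥0) (x : ℝ) :
    rexp (α * (x - m) - α ^ 2 * v / 2) * gaussianPDFReal m v x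
      = gaussianPDFReal (m + α * v) v x := by
  rcases eq_or_ne v 0 with rfl | hv
  · simp
  have hv' : (v : ℝ) ≠ 0 := by exact_mod_cast hv
  rw [gaussianPDFReal, gaussianPDFReal, mul_left_comm, ← Real.exp_add]
  congr 2
  field_simp
  ring

/-- Transition density of a Brownian motion started at `ξ` and killed at `0`, over a time span
in which it accumulates variance `v` and drifts by `α v`. -/
noncomputable def killedDriftKernel (α : ℝ) (v : ℝ≥0) (ξ x : ℝ) : ℝ :=
  rexp (α * (x - ξ) - α ^ 2 * v / 2) * (gaussianPDFReal ξ v x - gaussianPDFReal (-ξ) v x)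

lemma killedDriftKernel_eq (α : ℝ) (v : ℝ≥0) (ξ x : ℝ) :
    killedDriftKernel α v ξ x
      = gaussianPDFReal (ξ + α * v) v x
        - rexp (-2 * α * ξ) * gaussianPDFReal (-ξ + α * v) v x := by
  have hsplit : rexp (α * (x - ξ) - α ^ 2 * v / 2)
      = rexp (-2 * α * ξ) * rexp (α * (x - -ξ) - α ^ 2 * v / 2) := by
    rw [← Real.exp_add]; ring_nf
  rw [killedDriftKernel, mul_sub, gaussianPDFReal_tilt, hsplit, mul_assoc,
    gaussianPDFReal_tilt]

lemma gaussianPDFReal_neg_le {ξ x : ℝ} (hξ : 0 ≤ ξ) (hx : 0 ≤ x) (v : ℝ≥0) :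
    gaussianPDFReal (-ξ) v x ≤ gaussianPDFReal ξ v x := by
  unfold gaussianPDFReal
  gcongr _ * rexp ?_
  exact div_le_div_of_nonneg_right (by nlinarith [mul_nonneg hx hξ]) (by positivity)

lemma killedDriftKernel_nonneg (α : ℝ) (v : ℝ≥0) {ξ x : ℝ} (hξ : 0 ≤ ξ) (hx : 0 ≤ x) :
    0 ≤ killedDriftKernel α v ξ x :=
  mul_nonneg (Real.exp_nonneg _) (sub_nonneg.2 (gaussianPDFReal_neg_le hξ hx v))

lemma integrable_killedDriftKernel (α : ℝ) (v : ℝ≥0) (ξ : ℝ) :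
    Integrable (killedDriftKernel α v ξ) := by
  simp_rw [funext (killedDriftKernel_eq α v ξ)]
  exact (integrable_gaussianPDFReal _ v).sub ((integrable_gaussianPDFReal _ v).const_mul _)

lemma setIntegral_killedDriftKernel_le_one (α : ℝ) {v : ℝ≥0} (hv : v ≠ 0) (ξ : ℝ)
    (s : Set ℝ) : ∫ x in s, killedDriftKernel α v ξ x ≤ 1 := by
  have hle (x : ℝ) : killedDriftKernel α v ξ x ≤ gaussianPDFReal (ξ + α * v) v x := by
    rw [killedDriftKernel_eq]
    exact sub_le_self _ (mul_nonneg (Real.exp_nonneg _) (gaussianPDFReal_nonneg _ v x))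
  calc ∫ x in s, killedDriftKernel α v ξ x
      ≤ ∫ x in s, gaussianPDFReal (ξ + α * v) v x :=
        setIntegral_mono (integrable_killedDriftKernel α v ξ).integrableOn
          (integrable_gaussianPDFReal _ v).integrableOn hle
    _ ≤ ∫ x, gaussianPDFReal (ξ + α * v) v x :=
        setIntegral_le_integral (integrable_gaussianPDFReal _ v)
          (.of_forall fun x => gaussianPDFReal_nonneg _ v x)
    _ = 1 := integral_gaussianPDFReal_eq_one _ hv

lemma Kker_eq_mul_killedDriftKernel (C₁ C₂ : ℝ) {σ₁ σ₂ : ℝ} (hσ₁ : σ₁ ≠ 0) (hσ₂ : σ₂ ≠ 0)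
    (lam : ℝ) {τ t : ℝ} (hτt : τ ≤ t) (ξ x : ℝ × ℝ) :
    Kker C₁ C₂ σ₁ σ₂ lam t x τ ξ
      = rexp (-lam * (t - τ))
        * killedDriftKernel (C₁ / σ₁ ^ 2) (σ₁ ^ 2 * (t - τ)).toNNReal ξ.1 x.1
        * killedDriftKernel (C₂ / σ₂ ^ 2) (σ₂ ^ 2 * (t - τ)).toNNReal ξ.2 x.2 := by
  have hs : 0 ≤ t - τ := sub_nonneg.2 hτt
  have hexp :
      rexp (-(lam + C₁ ^ 2 / (2 * σ₁ ^ 2) + C₂ ^ 2 / (2 * σ₂ ^ 2)) * (t - τ)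
          + C₁ / σ₁ ^ 2 * (x.1 - ξ.1) + C₂ / σ₂ ^ 2 * (x.2 - ξ.2))
        = rexp (-lam * (t - τ))
          * rexp (C₁ / σ₁ ^ 2 * (x.1 - ξ.1) - (C₁ / σ₁ ^ 2) ^ 2 * (σ₁ ^ 2 * (t - τ)) / 2)
          * rexp (C₂ / σ₂ ^ 2 * (x.2 - ξ.2) - (C₂ / σ₂ ^ 2) ^ 2 * (σ₂ ^ 2 * (t - τ)) / 2) := by
    rw [← Real.exp_add, ← Real.exp_add]
    congr 1
    field_simp
    ring
  simp only [Kker, killedDriftKernel, gaussianPDFReal,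
    Real.coe_toNNReal _ (mul_nonneg (sq_nonneg _) hs), hexp, sub_neg_eq_add, mul_assoc]
  ring

/-- The kernel `K` is a nonnegative sub-stochastic kernel on the positive quadrant:
`K(t,x;τ,ξ) ≥ 0` for `x, ξ ∈ [0,∞)²`, and
`∫_{[0,∞)²} K(t,x;τ,ξ) dx ≤ exp(−λ(t−τ)) ≤ 1`. -/
theorem kernel_substochastic
    (C₁ C₂ σ₁ σ₂ lam : ℝ) (hσ₁ : 0 < σ₁) (hσ₂ : 0 < σ₂) (hlam : 0 ≤ lam)
    (τ t : ℝ) (hτt : τ < t) (ξ : ℝ × ℝ) (hξ : ξ ∈ Set.Ici (0 : ℝ) ×ˢ Set.Ici (0 : ℝ)) :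
    (∀ x ∈ Set.Ici (0 : ℝ) ×ˢ Set.Ici (0 : ℝ), 0 ≤ Kker C₁ C₂ σ₁ σ₂ lam t x τ ξ) ∧
    (∫ x in Set.Ici (0 : ℝ) ×ˢ Set.Ici (0 : ℝ), Kker C₁ C₂ σ₁ σ₂ lam t x τ ξ)
      ≤ Real.exp (-lam * (t - τ)) ∧
    Real.exp (-lam * (t - τ)) ≤ 1 := by
  set k₁ := killedDriftKernel (C₁ / σ₁ ^ 2) (σ₁ ^ 2 * (t - τ)).toNNReal ξ.1
  set k₂ := killedDriftKernel (C₂ / σ₂ ^ 2) (σ₂ ^ 2 * (t - τ)).toNNReal ξ.2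
  have hK (x : ℝ × ℝ) :
      Kker C₁ C₂ σ₁ σ₂ lam t x τ ξ = rexp (-lam * (t - τ)) * (k₁ x.1 * k₂ x.2) := by
    rw [Kker_eq_mul_killedDriftKernel C₁ C₂ hσ₁.ne' hσ₂.ne' lam hτt.le, mul_assoc]
  have hv (σ : ℝ) (hσ : 0 < σ) : (σ ^ 2 * (t - τ)).toNNReal ≠ 0 := by
    simpa using mul_pos (pow_pos hσ 2) (sub_pos.2 hτt)
  have hk₁ : ∫ x in Set.Ici 0, k₁ x ≤ 1 :=
    setIntegral_killedDriftKernel_le_one _ (hv σ₁ hσ₁) _ _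
  have hk₂ : ∫ x in Set.Ici 0, k₂ x ≤ 1 :=
    setIntegral_killedDriftKernel_le_one _ (hv σ₂ hσ₂) _ _
  have hk₂_nonneg : 0 ≤ ∫ x in Set.Ici 0, k₂ x :=
    setIntegral_nonneg measurableSet_Ici fun x hx => killedDriftKernel_nonneg _ _ hξ.2 hx
  refine ⟨fun x hx => ?_, ?_, Real.exp_le_one_iff.2 (by nlinarith)⟩
  · rw [hK]
    have : 0 ≤ k₁ x.1 := killedDriftKernel_nonneg _ _ hξ.1 hx.1
    have : 0 ≤ k₂ x.2 := killedDriftKernel_nonneg _ _ hξ.2 hx.2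
    positivity
  · simp_rw [hK]
    rw [integral_const_mul, Measure.volume_eq_prod, setIntegral_prod_mul]
    exact mul_le_of_le_one_right (Real.exp_nonneg _) (mul_le_one₀ hk₁ hk₂_nonneg hk₂)
end

section
/- (Volterra bound underlying the Neumann series.) For all τ₀ ≤ τ < t ≤ T and all ξ ∈ [0,∞)², the kernel G satisfies ∫_{[0,∞)²} |G(t,x;τ,ξ)| dx ≤ (λ₁ + λ₂ + λ₃) · exp(−λ(t−τ)); consequently, for every bounded measurable Ψ on [τ₀,T] × [0,∞)² with sup-norm ‖Ψ‖, the iterates of the operator (𝒯Ψ)(τ,ξ) = ∫_τ^T ∫_{[0,∞)²} G(t,x;τ,ξ) Ψ(t,x) dx dt satisfy ‖𝒯^k Ψ‖ ≤ (λ^k (T−τ₀)^k / k!) · ‖Ψ‖ for every k ≥ 1. -/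
/-!
The kernel `K` factors as `e^{-λ(t-τ)}` times two one-dimensional densities of drifted Brownian
motion killed at `0`; on the quadrant each is dominated by a Gaussian density of mass `1`. Each
jump term of `G` is then dominated by `e^{-λ(t-τ)}` times a product of two one-dimensional masses,
each a Gaussian mass or a Gaussian convolved with a jump density, hence at most `1` by Tonelli and
translation invariance; summing the three terms gives `∫ |G| ≤ λ e^{-λ(t-τ)} ≤ λ`. The bound on
the iterates is then the usual Volterra induction, with
`∫_τ^T λ (λ (T - t))^k / k! dt = (λ (T - τ))^{k+1} / (k+1)!`.

All estimates are made on `∫⁻ ‖·‖ₑ`, so no measurability of `G` in `x` is ever needed.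
-/

open Real MeasureTheory

/-- The kernel `G(t,x;τ,ξ)` of the Volterra integral equation, built from `K` and the claim
densities `p₁`, `p₂` with rates `λ₁, λ₂, λ₃` (total rate `λ = λ₁ + λ₂ + λ₃`). -/
noncomputable def Gker (C₁ C₂ σ₁ σ₂ l₁ l₂ l₃ : ℝ) (p₁ p₂ : ℝ → ℝ)
    (t : ℝ) (x : ℝ × ℝ) (τ : ℝ) (ξ : ℝ × ℝ) : ℝ :=
  -l₁ * (∫ z₁ in Set.Ici x.1, Kker C₁ C₂ σ₁ σ₂ (l₁ + l₂ + l₃) t (z₁, x.2) τ ξ * p₁ (z₁ - x.1))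
    - l₂ * (∫ z₂ in Set.Ici x.2, Kker C₁ C₂ σ₁ σ₂ (l₁ + l₂ + l₃) t (x.1, z₂) τ ξ * p₂ (z₂ - x.2))
    - l₃ * (∫ z₁ in Set.Ici x.1, ∫ z₂ in Set.Ici x.2,
        Kker C₁ C₂ σ₁ σ₂ (l₁ + l₂ + l₃) t (z₁, z₂) τ ξ * p₁ (z₁ - x.1) * p₂ (z₂ - x.2))

/-- The inhomogeneous term `F(τ,ξ) = ∫_{[0,∞)²} K(T,x;τ,ξ) dx` of the integral equation. -/
noncomputable def Fker (C₁ C₂ σ₁ σ₂ lam T : ℝ) (τ : ℝ) (ξ : ℝ × ℝ) : ℝ :=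
  ∫ x in Set.Ici (0 : ℝ) ×ˢ Set.Ici (0 : ℝ), Kker C₁ C₂ σ₁ σ₂ lam T x τ ξ

/-- The Volterra integral operator
`(𝒯Ψ)(τ,ξ) = ∫_τ^T ∫_{[0,∞)²} G(t,x;τ,ξ) Ψ(t,x) dx dt`. -/
noncomputable def neumannOp (C₁ C₂ σ₁ σ₂ l₁ l₂ l₃ T : ℝ) (p₁ p₂ : ℝ → ℝ)
    (Ψ : ℝ → ℝ × ℝ → ℝ) : ℝ → ℝ × ℝ → ℝ :=
  fun τ ξ => ∫ t in Set.Ioc τ T, ∫ x in Set.Ici (0 : ℝ) ×ˢ Set.Ici (0 : ℝ),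
    Gker C₁ C₂ σ₁ σ₂ l₁ l₂ l₃ p₁ p₂ t x τ ξ * Ψ t x

open Set ProbabilityTheory
open scoped ENNReal NNReal

/-- Transition density of Brownian motion with drift `C` and volatility `σ`, started at `ξ` and
killed at `0`, after time `s` (method of images). -/
noncomputable def killedDriftDensity (C σ s ξ z : ℝ) : ℝ :=
  exp (-(C ^ 2 / (2 * σ ^ 2)) * s + C / σ ^ 2 * (z - ξ)) *
    ((√(2 * π * σ ^ 2 * s))⁻¹ *
      (exp (-(z - ξ) ^ 2 / (2 * σ ^ 2 * s)) - exp (-(z + ξ) ^ 2 / (2 * σ ^ 2 * s))))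

lemma Kker_eq_mul_killedDriftDensity (C₁ C₂ σ₁ σ₂ lam t τ : ℝ) (z ξ : ℝ × ℝ) :
    Kker C₁ C₂ σ₁ σ₂ lam t z τ ξ = exp (-lam * (t - τ)) *
      killedDriftDensity C₁ σ₁ (t - τ) ξ.1 z.1 * killedDriftDensity C₂ σ₂ (t - τ) ξ.2 z.2 := by
  have hexp : exp (-(lam + C₁ ^ 2 / (2 * σ₁ ^ 2) + C₂ ^ 2 / (2 * σ₂ ^ 2)) * (t - τ)
      + C₁ / σ₁ ^ 2 * (z.1 - ξ.1) + C₂ / σ₂ ^ 2 * (z.2 - ξ.2)) = exp (-lam * (t - τ)) *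
      exp (-(C₁ ^ 2 / (2 * σ₁ ^ 2)) * (t - τ) + C₁ / σ₁ ^ 2 * (z.1 - ξ.1)) *
      exp (-(C₂ ^ 2 / (2 * σ₂ ^ 2)) * (t - τ) + C₂ / σ₂ ^ 2 * (z.2 - ξ.2)) := by
    rw [← exp_add, ← exp_add]; ring_nf
  rw [Kker, hexp, killedDriftDensity, killedDriftDensity]
  ring

lemma killedDriftDensity_nonneg (C : ℝ) {σ s ξ z : ℝ} (hs : 0 < s) (hξ : 0 ≤ ξ) (hz : 0 ≤ z) :
    0 ≤ killedDriftDensity C σ s ξ z := by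
  have himage : exp (-(z + ξ) ^ 2 / (2 * σ ^ 2 * s)) ≤ exp (-(z - ξ) ^ 2 / (2 * σ ^ 2 * s)) :=
    exp_le_exp.2 (div_le_div_of_nonneg_right (by nlinarith) (by positivity))
  have := sub_nonneg.2 himage
  unfold killedDriftDensity
  positivity

lemma killedDriftDensity_le_gaussianPDFReal (C : ℝ) {σ s : ℝ} (hσ : 0 < σ) (hs : 0 < s)
    (ξ z : ℝ) :
    killedDriftDensity C σ s ξ z ≤ gaussianPDFReal (ξ + C * s) (σ ^ 2 * s).toNNReal z := by
  have hv : ((σ ^ 2 * s).toNNReal : ℝ) = σ ^ 2 * s := Real.coe_toNNReal _ (by positivity)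
  -- completing the square turns the drift factor into a shift of the mean by `C * s`
  have hsquare : -(C ^ 2 / (2 * σ ^ 2)) * s + C / σ ^ 2 * (z - ξ) + -(z - ξ) ^ 2 / (2 * σ ^ 2 * s)
      = -(z - (ξ + C * s)) ^ 2 / (2 * (σ ^ 2 * s)) := by
    field_simp; ring
  calc killedDriftDensity C σ s ξ z
      ≤ exp (-(C ^ 2 / (2 * σ ^ 2)) * s + C / σ ^ 2 * (z - ξ)) *
          ((√(2 * π * σ ^ 2 * s))⁻¹ * exp (-(z - ξ) ^ 2 / (2 * σ ^ 2 * s))) := by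
        unfold killedDriftDensity
        gcongr
        exact sub_le_self _ (exp_nonneg _)
    _ = gaussianPDFReal (ξ + C * s) (σ ^ 2 * s).toNNReal z := by
        rw [gaussianPDFReal, hv, ← hsquare, exp_add (-(C ^ 2 / (2 * σ ^ 2)) * s + _),
          ← mul_assoc (2 * π)]
        ring

lemma enorm_Kker_le (C₁ C₂ : ℝ) {σ₁ σ₂ : ℝ} (hσ₁ : 0 < σ₁) (hσ₂ : 0 < σ₂) (lam : ℝ) {t τ : ℝ}
    (hτt : τ < t) {ξ z : ℝ × ℝ} (hξ : ξ ∈ Ici (0 : ℝ) ×ˢ Ici (0 : ℝ))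
    (hz : z ∈ Ici (0 : ℝ) ×ˢ Ici (0 : ℝ)) :
    ‖Kker C₁ C₂ σ₁ σ₂ lam t z τ ξ‖ₑ ≤ ENNReal.ofReal (exp (-lam * (t - τ))) *
      gaussianPDF (ξ.1 + C₁ * (t - τ)) (σ₁ ^ 2 * (t - τ)).toNNReal z.1 *
      gaussianPDF (ξ.2 + C₂ * (t - τ)) (σ₂ ^ 2 * (t - τ)).toNNReal z.2 := by
  have hs : 0 < t - τ := sub_pos.2 hτt
  have h₁ := killedDriftDensity_nonneg C₁ (σ := σ₁) hs hξ.1 hz.1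
  have h₂ := killedDriftDensity_nonneg C₂ (σ := σ₂) hs hξ.2 hz.2
  rw [Kker_eq_mul_killedDriftDensity, Real.enorm_eq_ofReal_abs, abs_of_nonneg (by positivity),
    gaussianPDF, gaussianPDF, ← ENNReal.ofReal_mul (exp_nonneg _),
    ← ENNReal.ofReal_mul (mul_nonneg (exp_nonneg _) (gaussianPDFReal_nonneg _ _ _))]
  refine ENNReal.ofReal_le_ofReal (mul_le_mul (mul_le_mul_of_nonneg_left ?_ (exp_nonneg _)) ?_ h₂
    (mul_nonneg (exp_nonneg _) (gaussianPDFReal_nonneg _ _ _)))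
  · exact killedDriftDensity_le_gaussianPDFReal C₁ hσ₁ hs _ _
  · exact killedDriftDensity_le_gaussianPDFReal C₂ hσ₂ hs _ _

lemma setLIntegral_Ici_eq_comp_add (f : ℝ → ℝ≥0∞) (a : ℝ) :
    ∫⁻ z in Ici a, f z = ∫⁻ y in Ici 0, f (y + a) := by
  rw [← (measurePreserving_add_right volume a).setLIntegral_comp_preimage_emb
    (measurableEmbedding_addRight a), preimage_add_const_Ici, sub_self]

lemma setLIntegral_prod_mul {α β : Type*} [MeasurableSpace α] [MeasurableSpace β]
    {μ : Measure α} {ν : Measure β} [SFinite μ] [SFinite ν] (s : Set α) (t : Set β) {f : α → ℝ≥0∞}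
    {g : β → ℝ≥0∞} (hf : AEMeasurable f (μ.restrict s)) (hg : AEMeasurable g (ν.restrict t)) :
    ∫⁻ x in s ×ˢ t, f x.1 * g x.2 ∂μ.prod ν = (∫⁻ a in s, f a ∂μ) * ∫⁻ b in t, g b ∂ν := by
  rw [← Measure.prod_restrict, lintegral_prod_mul hf hg]

noncomputable def jumpMean (P f : ℝ → ℝ≥0∞) (a : ℝ) : ℝ≥0∞ :=
  ∫⁻ y in Ici 0, f (y + a) * P y

section jumpMean

variable {P f : ℝ → ℝ≥0∞}

lemma measurable_jumpMean (hP : Measurable P) (hf : Measurable f) : Measurable (jumpMean P f) :=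
  Measurable.lintegral_prod_right' <|
    (hf.comp (measurable_snd.add measurable_fst)).mul (hP.comp measurable_snd)

lemma lintegral_jumpMean_le (hP : Measurable P) (hf : Measurable f) :
    ∫⁻ a in Ici 0, jumpMean P f a ≤ (∫⁻ z, f z) * ∫⁻ y in Ici 0, P y := by
  have hmeas : Measurable fun q : ℝ × ℝ => f (q.2 + q.1) * P q.2 :=
    (hf.comp (measurable_snd.add measurable_fst)).mul (hP.comp measurable_snd)
  unfold jumpMean
  rw [lintegral_lintegral_swap hmeas.aemeasurable, ← lintegral_const_mul _ hP]
  refine lintegral_mono fun y => ?_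
  rw [lintegral_mul_const _ (by fun_prop)]
  gcongr ?_ * _
  exact (setLIntegral_le_lintegral _ _).trans_eq (lintegral_add_left_eq_self f y)

lemma setLIntegral_Ici_mul_le_jumpMean (hP : Measurable P) (hf : Measurable f)
    {F : ℝ → ℝ≥0∞} {c : ℝ≥0∞} {a : ℝ} (hF : ∀ z, a ≤ z → F z ≤ c * f z) :
    ∫⁻ z in Ici a, F z * P (z - a) ≤ c * jumpMean P f a := by
  rw [setLIntegral_Ici_eq_comp_add, jumpMean, ← lintegral_const_mul _ (by fun_prop)]
  refine setLIntegral_mono' measurableSet_Ici fun y hy => ?_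
  rw [add_sub_cancel_right, ← mul_assoc]
  gcongr
  exact hF _ (le_add_of_nonneg_left hy)

end jumpMean

section Gker

variable (C₁ C₂ σ₁ σ₂ l₁ l₂ l₃ : ℝ) {p₁ p₂ : ℝ → ℝ} (t τ : ℝ) (ξ : ℝ × ℝ)
  {E : ℝ≥0∞} {g₁ g₂ : ℝ → ℝ≥0∞}

lemma enorm_Gker_le (hp₁ : Measurable p₁) (hp₂ : Measurable p₂) (hg₁ : Measurable g₁)
    (hg₂ : Measurable g₂) (hK : ∀ z ∈ Ici (0 : ℝ) ×ˢ Ici (0 : ℝ),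
      ‖Kker C₁ C₂ σ₁ σ₂ (l₁ + l₂ + l₃) t z τ ξ‖ₑ ≤ E * g₁ z.1 * g₂ z.2)
    {x : ℝ × ℝ} (hx : x ∈ Ici (0 : ℝ) ×ˢ Ici (0 : ℝ)) :
    ‖Gker C₁ C₂ σ₁ σ₂ l₁ l₂ l₃ p₁ p₂ t x τ ξ‖ₑ ≤
      E * (‖l₁‖ₑ * (jumpMean (‖p₁ ·‖ₑ) g₁ x.1 * g₂ x.2)
        + ‖l₂‖ₑ * (g₁ x.1 * jumpMean (‖p₂ ·‖ₑ) g₂ x.2)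
        + ‖l₃‖ₑ * (jumpMean (‖p₁ ·‖ₑ) g₁ x.1 * jumpMean (‖p₂ ·‖ₑ) g₂ x.2)) := by
  set K := fun z => Kker C₁ C₂ σ₁ σ₂ (l₁ + l₂ + l₃) t z τ ξ
  have hx₁ : (0 : ℝ) ≤ x.1 := hx.1
  have hx₂ : (0 : ℝ) ≤ x.2 := hx.2
  have h₁ : ‖∫ z in Ici x.1, K (z, x.2) * p₁ (z - x.1)‖ₑ
      ≤ E * g₂ x.2 * jumpMean (‖p₁ ·‖ₑ) g₁ x.1 := by
    refine (enorm_integral_le_lintegral_enorm _).trans ?_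
    simp only [enorm_mul]
    exact setLIntegral_Ici_mul_le_jumpMean hp₁.enorm hg₁ fun z hz =>
      (hK (z, x.2) ⟨hx₁.trans hz, hx₂⟩).trans_eq (mul_right_comm _ _ _)
  have h₂ : ‖∫ z in Ici x.2, K (x.1, z) * p₂ (z - x.2)‖ₑ
      ≤ E * g₁ x.1 * jumpMean (‖p₂ ·‖ₑ) g₂ x.2 := by
    refine (enorm_integral_le_lintegral_enorm _).trans ?_
    simp only [enorm_mul]
    exact setLIntegral_Ici_mul_le_jumpMean hp₂.enorm hg₂ fun z hz => hK (x.1, z) ⟨hx₁, hx₂.trans hz⟩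
  have h₃ : ‖∫ z₁ in Ici x.1, ∫ z₂ in Ici x.2, K (z₁, z₂) * p₁ (z₁ - x.1) * p₂ (z₂ - x.2)‖ₑ
      ≤ E * jumpMean (‖p₂ ·‖ₑ) g₂ x.2 * jumpMean (‖p₁ ·‖ₑ) g₁ x.1 := by
    refine (enorm_integral_le_lintegral_enorm _).trans ?_
    refine le_trans (lintegral_mono fun z₁ => (enorm_integral_le_lintegral_enorm _).trans_eq ?_)
      (setLIntegral_Ici_mul_le_jumpMean hp₁.enorm hg₁ fun z₁ hz₁ =>
        (setLIntegral_Ici_mul_le_jumpMean hp₂.enorm hg₂ fun z₂ hz₂ =>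
          hK (z₁, z₂) ⟨hx₁.trans hz₁, hx₂.trans hz₂⟩).trans_eq (mul_right_comm _ _ _))
    simp only [enorm_mul, mul_right_comm _ ‖p₁ _‖ₑ]
    exact lintegral_mul_const' _ _ enorm_ne_top
  calc ‖Gker C₁ C₂ σ₁ σ₂ l₁ l₂ l₃ p₁ p₂ t x τ ξ‖ₑ
      ≤ ‖l₁‖ₑ * ‖∫ z in Ici x.1, K (z, x.2) * p₁ (z - x.1)‖ₑ
        + ‖l₂‖ₑ * ‖∫ z in Ici x.2, K (x.1, z) * p₂ (z - x.2)‖ₑ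
        + ‖l₃‖ₑ * ‖∫ z₁ in Ici x.1, ∫ z₂ in Ici x.2,
            K (z₁, z₂) * p₁ (z₁ - x.1) * p₂ (z₂ - x.2)‖ₑ := by
        refine enorm_sub_le.trans ?_
        rw [enorm_mul l₃]
        refine add_le_add (enorm_sub_le.trans_eq ?_) le_rfl
        rw [enorm_mul, enorm_mul, enorm_neg]
    _ ≤ ‖l₁‖ₑ * (E * g₂ x.2 * jumpMean (‖p₁ ·‖ₑ) g₁ x.1)
        + ‖l₂‖ₑ * (E * g₁ x.1 * jumpMean (‖p₂ ·‖ₑ) g₂ x.2)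
        + ‖l₃‖ₑ * (E * jumpMean (‖p₂ ·‖ₑ) g₂ x.2 * jumpMean (‖p₁ ·‖ₑ) g₁ x.1) := by
        gcongr
    _ = _ := by ring

lemma lintegral_enorm_Gker_le (hp₁ : Measurable p₁) (hp₂ : Measurable p₂) (hg₁ : Measurable g₁)
    (hg₂ : Measurable g₂) (hg₁_le : ∫⁻ z, g₁ z ≤ 1) (hg₂_le : ∫⁻ z, g₂ z ≤ 1)
    (hp₁_le : ∫⁻ y in Ici 0, ‖p₁ y‖ₑ ≤ 1) (hp₂_le : ∫⁻ y in Ici 0, ‖p₂ y‖ₑ ≤ 1)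
    (hK : ∀ z ∈ Ici (0 : ℝ) ×ˢ Ici (0 : ℝ),
      ‖Kker C₁ C₂ σ₁ σ₂ (l₁ + l₂ + l₃) t z τ ξ‖ₑ ≤ E * g₁ z.1 * g₂ z.2) :
    ∫⁻ x in Ici (0 : ℝ) ×ˢ Ici (0 : ℝ), ‖Gker C₁ C₂ σ₁ σ₂ l₁ l₂ l₃ p₁ p₂ t x τ ξ‖ₑ
      ≤ E * (‖l₁‖ₑ + ‖l₂‖ₑ + ‖l₃‖ₑ) := by
  set J₁ := jumpMean (‖p₁ ·‖ₑ) g₁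
  set J₂ := jumpMean (‖p₂ ·‖ₑ) g₂
  have hJ₁ : Measurable J₁ := measurable_jumpMean hp₁.enorm hg₁
  have hJ₂ : Measurable J₂ := measurable_jumpMean hp₂.enorm hg₂
  have hJ₁_le : ∫⁻ a in Ici 0, J₁ a ≤ 1 :=
    (lintegral_jumpMean_le hp₁.enorm hg₁).trans (mul_le_one' hg₁_le hp₁_le)
  have hJ₂_le : ∫⁻ a in Ici 0, J₂ a ≤ 1 :=
    (lintegral_jumpMean_le hp₂.enorm hg₂).trans (mul_le_one' hg₂_le hp₂_le)
  have hquadrant {F G : ℝ → ℝ≥0∞} (hF : Measurable F) (hG : Measurable G)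
      (hF_le : ∫⁻ a in Ici 0, F a ≤ 1) (hG_le : ∫⁻ b in Ici 0, G b ≤ 1) :
      ∫⁻ x in Ici (0 : ℝ) ×ˢ Ici (0 : ℝ), F x.1 * G x.2 ≤ 1 := by
    rw [Measure.volume_eq_prod, setLIntegral_prod_mul _ _ hF.aemeasurable hG.aemeasurable]
    exact mul_le_one' hF_le hG_le
  calc ∫⁻ x in Ici (0 : ℝ) ×ˢ Ici (0 : ℝ), ‖Gker C₁ C₂ σ₁ σ₂ l₁ l₂ l₃ p₁ p₂ t x τ ξ‖ₑ
      ≤ ∫⁻ x in Ici (0 : ℝ) ×ˢ Ici (0 : ℝ), E * (‖l₁‖ₑ * (J₁ x.1 * g₂ x.2)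
          + ‖l₂‖ₑ * (g₁ x.1 * J₂ x.2) + ‖l₃‖ₑ * (J₁ x.1 * J₂ x.2)) :=
        setLIntegral_mono' (measurableSet_Ici.prod measurableSet_Ici) fun x hx =>
          enorm_Gker_le C₁ C₂ σ₁ σ₂ l₁ l₂ l₃ t τ ξ hp₁ hp₂ hg₁ hg₂ hK hx
    _ = E * (‖l₁‖ₑ * (∫⁻ x in Ici (0 : ℝ) ×ˢ Ici (0 : ℝ), J₁ x.1 * g₂ x.2)
          + ‖l₂‖ₑ * (∫⁻ x in Ici (0 : ℝ) ×ˢ Ici (0 : ℝ), g₁ x.1 * J₂ x.2)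
          + ‖l₃‖ₑ * ∫⁻ x in Ici (0 : ℝ) ×ˢ Ici (0 : ℝ), J₁ x.1 * J₂ x.2) := by
        rw [lintegral_const_mul _ (by fun_prop), lintegral_add_left (by fun_prop),
          lintegral_add_left (by fun_prop), lintegral_const_mul _ (by fun_prop),
          lintegral_const_mul _ (by fun_prop), lintegral_const_mul _ (by fun_prop)]
    _ ≤ E * (‖l₁‖ₑ * 1 + ‖l₂‖ₑ * 1 + ‖l₃‖ₑ * 1) := by
        have hg₁_le' := (setLIntegral_le_lintegral (Ici 0) g₁).trans hg₁_le
        have hg₂_le' := (setLIntegral_le_lintegral (Ici 0) g₂).trans hg₂_le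
        gcongr
        · exact hquadrant hJ₁ hg₂ hJ₁_le hg₂_le'
        · exact hquadrant hg₁ hJ₂ hg₁_le' hJ₂_le
        · exact hquadrant hJ₁ hJ₂ hJ₁_le hJ₂_le
    _ = E * (‖l₁‖ₑ + ‖l₂‖ₑ + ‖l₃‖ₑ) := by simp only [mul_one]

end Gker

lemma lintegral_enorm_eq_one_of_integral_eq_one {α : Type*} [MeasurableSpace α] {μ : Measure α}
    {p : α → ℝ} (hp : ∀ y, 0 ≤ p y) (h : ∫ y, p y ∂μ = 1) : ∫⁻ y, ‖p y‖ₑ ∂μ = 1 := by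
  have hint : Integrable p μ := by
    by_contra hnot
    rw [integral_undef hnot] at h
    exact zero_ne_one h
  rw [← ofReal_integral_norm_eq_lintegral_enorm hint]
  simp [Real.norm_of_nonneg (hp _), h]

lemma integral_abs_le_of_lintegral_enorm_le {α : Type*} [MeasurableSpace α] {μ : Measure α}
    {f : α → ℝ} {b : ℝ} (hb : 0 ≤ b) (h : ∫⁻ x, ‖f x‖ₑ ∂μ ≤ ENNReal.ofReal b) :
    ∫ x, |f x| ∂μ ≤ b := by
  refine (Real.le_norm_self _).trans <| (norm_integral_le_lintegral_norm _).trans <|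
    ENNReal.toReal_le_of_le_ofReal hb ?_
  simpa [Real.enorm_eq_ofReal_abs] using h

lemma lintegral_enorm_Gker_le_exp (C₁ C₂ : ℝ) {σ₁ σ₂ l₁ l₂ l₃ : ℝ} (hσ₁ : 0 < σ₁) (hσ₂ : 0 < σ₂)
    (hl₁ : 0 ≤ l₁) (hl₂ : 0 ≤ l₂) (hl₃ : 0 ≤ l₃) {p₁ p₂ : ℝ → ℝ}
    (hp₁m : Measurable p₁) (hp₂m : Measurable p₂) (hp₁ : ∀ y, 0 ≤ p₁ y) (hp₂ : ∀ y, 0 ≤ p₂ y)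
    (hp₁int : ∫ y in Ici (0 : ℝ), p₁ y = 1) (hp₂int : ∫ y in Ici (0 : ℝ), p₂ y = 1)
    {t τ : ℝ} (hτt : τ < t) {ξ : ℝ × ℝ} (hξ : ξ ∈ Ici (0 : ℝ) ×ˢ Ici (0 : ℝ)) :
    ∫⁻ x in Ici (0 : ℝ) ×ˢ Ici (0 : ℝ), ‖Gker C₁ C₂ σ₁ σ₂ l₁ l₂ l₃ p₁ p₂ t x τ ξ‖ₑ
      ≤ ENNReal.ofReal ((l₁ + l₂ + l₃) * exp (-(l₁ + l₂ + l₃) * (t - τ))) := by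
  have hs : 0 < t - τ := sub_pos.2 hτt
  have hv₁ : (σ₁ ^ 2 * (t - τ)).toNNReal ≠ 0 := (Real.toNNReal_pos.2 (by positivity)).ne'
  have hv₂ : (σ₂ ^ 2 * (t - τ)).toNNReal ≠ 0 := (Real.toNNReal_pos.2 (by positivity)).ne'
  refine (lintegral_enorm_Gker_le C₁ C₂ σ₁ σ₂ l₁ l₂ l₃ t τ ξ hp₁m hp₂m
    (measurable_gaussianPDF _ _) (measurable_gaussianPDF _ _)
    (lintegral_gaussianPDF_eq_one _ hv₁).le (lintegral_gaussianPDF_eq_one _ hv₂).le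
    (lintegral_enorm_eq_one_of_integral_eq_one hp₁ hp₁int).le
    (lintegral_enorm_eq_one_of_integral_eq_one hp₂ hp₂int).le
    fun z hz => enorm_Kker_le C₁ C₂ hσ₁ hσ₂ _ hτt hξ hz).trans_eq ?_
  rw [Real.enorm_of_nonneg hl₁, Real.enorm_of_nonneg hl₂, Real.enorm_of_nonneg hl₃,
    ← ENNReal.ofReal_add hl₁ hl₂, ← ENNReal.ofReal_add (by positivity) hl₃,
    ← ENNReal.ofReal_mul (exp_nonneg _), mul_comm]

lemma abs_integral_mul_le {α : Type*} [MeasurableSpace α] {μ : Measure α} {g f : α → ℝ}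
    {c b : ℝ} (hc : 0 ≤ c) (hb : 0 ≤ b) (hg : ∫⁻ x, ‖g x‖ₑ ∂μ ≤ ENNReal.ofReal c)
    (hf : ∀ᵐ x ∂μ, |f x| ≤ b) :
    |∫ x, g x * f x ∂μ| ≤ c * b := by
  rw [← ENNReal.ofReal_le_ofReal_iff (by positivity), ← Real.enorm_eq_ofReal_abs]
  calc ‖∫ x, g x * f x ∂μ‖ₑ
      ≤ ∫⁻ x, ‖g x‖ₑ * ‖f x‖ₑ ∂μ := by
        simpa only [enorm_mul] using enorm_integral_le_lintegral_enorm fun x => g x * f x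
    _ ≤ ∫⁻ x, ‖g x‖ₑ * ENNReal.ofReal b ∂μ := by
        refine lintegral_mono_ae (hf.mono fun x hx => ?_)
        rw [Real.enorm_eq_ofReal_abs (f x)]
        gcongr
    _ = (∫⁻ x, ‖g x‖ₑ ∂μ) * ENNReal.ofReal b := lintegral_mul_const' _ _ ENNReal.ofReal_ne_top
    _ ≤ ENNReal.ofReal (c * b) := by
        rw [ENNReal.ofReal_mul hc]
        gcongr

lemma setIntegral_Ioc_sub_pow {τ T : ℝ} (h : τ ≤ T) (k : ℕ) :
    ∫ t in Ioc τ T, (T - t) ^ k = (T - τ) ^ (k + 1) / (k + 1) := by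
  rw [← intervalIntegral.integral_of_le h,
    intervalIntegral.integral_comp_sub_left (fun x => x ^ k) T, sub_self, integral_pow]
  norm_num

noncomputable def volterraOp {α : Type*} [MeasurableSpace α] (μ : Measure α) (S : Set α) (T : ℝ)
    (G : ℝ → α → ℝ → α → ℝ) (Ψ : ℝ → α → ℝ) : ℝ → α → ℝ :=
  fun τ ξ => ∫ t in Ioc τ T, ∫ x in S, G t x τ ξ * Ψ t x ∂μ

section volterraOp

variable {α : Type*} [MeasurableSpace α] {μ : Measure α} {S : Set α} {T : ℝ}
  {G : ℝ → α → ℝ → α → ℝ}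

lemma abs_volterraOp_le (hS : MeasurableSet S) {c : ℝ} (hc : 0 ≤ c) {τ : ℝ} {ξ : α}
    {Ψ : ℝ → α → ℝ} {B : ℝ → ℝ} (hB : IntegrableOn B (Ioc τ T))
    (hB_nonneg : ∀ t ∈ Ioc τ T, 0 ≤ B t)
    (hG : ∀ t ∈ Ioc τ T, ∫⁻ x in S, ‖G t x τ ξ‖ₑ ∂μ ≤ ENNReal.ofReal c)
    (hΨ : ∀ t ∈ Ioc τ T, ∀ x ∈ S, |Ψ t x| ≤ B t) :
    |volterraOp μ S T G Ψ τ ξ| ≤ c * ∫ t in Ioc τ T, B t := by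
  rw [← Real.norm_eq_abs, ← integral_const_mul c B]
  refine norm_integral_le_of_norm_le (f := fun t => ∫ x in S, G t x τ ξ * Ψ t x ∂μ)
    (hB.const_mul c) ?_
  filter_upwards [ae_restrict_mem measurableSet_Ioc] with t ht
  exact abs_integral_mul_le hc (hB_nonneg t ht) (hG t ht)
    ((ae_restrict_iff' hS).2 (ae_of_all _ (hΨ t ht)))

theorem abs_iterate_volterraOp_le (hS : MeasurableSet S) {lam τ₀ : ℝ} (hlam : 0 ≤ lam)
    (hG : ∀ τ t, τ₀ ≤ τ → τ < t → t ≤ T → ∀ ξ ∈ S,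
      ∫⁻ x in S, ‖G t x τ ξ‖ₑ ∂μ ≤ ENNReal.ofReal lam)
    {Ψ : ℝ → α → ℝ} {M : ℝ} (hM_nonneg : 0 ≤ M) (hM : ∀ τ ∈ Icc τ₀ T, ∀ ξ ∈ S, |Ψ τ ξ| ≤ M)
    (k : ℕ) : ∀ τ ∈ Icc τ₀ T, ∀ ξ ∈ S,
      |(volterraOp μ S T G)^[k] Ψ τ ξ| ≤ lam ^ k * (T - τ) ^ k / k.factorial * M := by
  induction k with
  | zero => simpa using hM
  | succ k ih =>
    intro τ hτ ξ hξ
    rw [Function.iterate_succ_apply']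
    refine (abs_volterraOp_le (B := fun t => lam ^ k * (T - t) ^ k / k.factorial * M) hS hlam
      (Continuous.integrableOn_Ioc (by fun_prop))
      (fun t ht => by have := sub_nonneg.2 ht.2; positivity)
      (fun t ht => hG τ t hτ.1 ht.1 ht.2 ξ hξ)
      (fun t ht => ih t ⟨hτ.1.trans ht.1.le, ht.2⟩)).trans_eq ?_
    simp_rw [div_mul_eq_mul_div, mul_right_comm _ _ M]
    rw [integral_div, integral_const_mul, setIntegral_Ioc_sub_pow hτ.2, Nat.factorial_succ]
    push_cast
    field_simp
    ring

end volterraOp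

theorem volterra_bound_general
    (C₁ C₂ σ₁ σ₂ l₁ l₂ l₃ : ℝ) (hσ₁ : 0 < σ₁) (hσ₂ : 0 < σ₂)
    (hl₁ : 0 ≤ l₁) (hl₂ : 0 ≤ l₂) (hl₃ : 0 ≤ l₃)
    (p₁ p₂ : ℝ → ℝ) (hp₁m : Measurable p₁) (hp₂m : Measurable p₂)
    (hp₁ : ∀ y, 0 ≤ p₁ y) (hp₂ : ∀ y, 0 ≤ p₂ y)
    (hp₁int : ∫ y in Set.Ici (0 : ℝ), p₁ y = 1) (hp₂int : ∫ y in Set.Ici (0 : ℝ), p₂ y = 1)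
    (τ₀ T : ℝ) (hτ₀T : τ₀ < T) :
    (∀ τ t : ℝ, τ₀ ≤ τ → τ < t → t ≤ T →
      ∀ ξ ∈ Set.Ici (0 : ℝ) ×ˢ Set.Ici (0 : ℝ),
        (∫ x in Set.Ici (0 : ℝ) ×ˢ Set.Ici (0 : ℝ),
            |Gker C₁ C₂ σ₁ σ₂ l₁ l₂ l₃ p₁ p₂ t x τ ξ|)
          ≤ (l₁ + l₂ + l₃) * Real.exp (-(l₁ + l₂ + l₃) * (t - τ))) ∧
    (∀ Ψ : ℝ → ℝ × ℝ → ℝ, Measurable (Function.uncurry Ψ) →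
      ∀ M : ℝ, (∀ τ ∈ Set.Icc τ₀ T, ∀ ξ ∈ Set.Ici (0 : ℝ) ×ˢ Set.Ici (0 : ℝ), |Ψ τ ξ| ≤ M) →
      ∀ k : ℕ, 1 ≤ k →
        ∀ τ ∈ Set.Icc τ₀ T, ∀ ξ ∈ Set.Ici (0 : ℝ) ×ˢ Set.Ici (0 : ℝ),
          |(neumannOp C₁ C₂ σ₁ σ₂ l₁ l₂ l₃ T p₁ p₂)^[k] Ψ τ ξ|
            ≤ (l₁ + l₂ + l₃) ^ k * (T - τ₀) ^ k / (Nat.factorial k) * M) := by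
  have hlam : 0 ≤ l₁ + l₂ + l₃ := by positivity
  have hG {τ t : ℝ} (hτt : τ < t) {ξ : ℝ × ℝ} (hξ : ξ ∈ Ici (0 : ℝ) ×ˢ Ici (0 : ℝ)) :=
    lintegral_enorm_Gker_le_exp C₁ C₂ hσ₁ hσ₂ hl₁ hl₂ hl₃ hp₁m hp₂m hp₁ hp₂ hp₁int hp₂int hτt hξ
  refine ⟨fun τ t _ hτt _ ξ hξ =>
    integral_abs_le_of_lintegral_enorm_le (by positivity) (hG hτt hξ), ?_⟩
  intro Ψ _ M hM k _ τ hτ ξ hξ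
  have hM_nonneg : 0 ≤ M := (abs_nonneg _).trans (hM τ₀ ⟨le_rfl, hτ₀T.le⟩ (0, 0) (by simp))
  have hG_le (τ t : ℝ) (_ : τ₀ ≤ τ) (hτt : τ < t) (_ : t ≤ T) (ξ : ℝ × ℝ)
      (hξ : ξ ∈ Ici (0 : ℝ) ×ˢ Ici (0 : ℝ)) :
      ∫⁻ x in Ici (0 : ℝ) ×ˢ Ici (0 : ℝ), ‖Gker C₁ C₂ σ₁ σ₂ l₁ l₂ l₃ p₁ p₂ t x τ ξ‖ₑ
        ≤ ENNReal.ofReal (l₁ + l₂ + l₃) :=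
    (hG hτt hξ).trans <| ENNReal.ofReal_le_ofReal <| mul_le_of_le_one_right hlam <|
      exp_le_one_iff.2 (by nlinarith)
  refine (abs_iterate_volterraOp_le (measurableSet_Ici.prod measurableSet_Ici) hlam hG_le
    hM_nonneg hM k τ hτ ξ hξ).trans ?_
  have hTτ := sub_nonneg.2 hτ.2
  gcongr
  exact hτ.1

/-- Volterra bound underlying the Neumann series: `∫_{[0,∞)²} |G(t,x;τ,ξ)| dx ≤ λ e^{−λ(t−τ)}`
for `τ₀ ≤ τ < t ≤ T` and `ξ ∈ [0,∞)²`; consequently, for every bounded measurable `Ψ`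
(with bound `M` on `[τ₀,T] × [0,∞)²`), the iterates of `𝒯` satisfy
`‖𝒯ᵏΨ‖ ≤ λᵏ(T−τ₀)ᵏ/k! · M` for every `k ≥ 1`. -/
theorem volterra_bound
    (C₁ C₂ σ₁ σ₂ l₁ l₂ l₃ : ℝ) (hσ₁ : 0 < σ₁) (hσ₂ : 0 < σ₂)
    (hl₁ : 0 ≤ l₁) (hl₂ : 0 ≤ l₂) (hl₃ : 0 ≤ l₃)
    (p₁ p₂ : ℝ → ℝ) (hp₁m : Measurable p₁) (hp₂m : Measurable p₂)
    (hp₁ : ∀ y, 0 ≤ p₁ y) (hp₂ : ∀ y, 0 ≤ p₂ y)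
    (hp₁int : ∫ y in Set.Ici (0 : ℝ), p₁ y = 1) (hp₂int : ∫ y in Set.Ici (0 : ℝ), p₂ y = 1)
    (τ₀ T : ℝ) (hτ₀ : 0 ≤ τ₀) (hτ₀T : τ₀ < T) :
    (∀ τ t : ℝ, τ₀ ≤ τ → τ < t → t ≤ T →
      ∀ ξ ∈ Set.Ici (0 : ℝ) ×ˢ Set.Ici (0 : ℝ),
        (∫ x in Set.Ici (0 : ℝ) ×ˢ Set.Ici (0 : ℝ),
            |Gker C₁ C₂ σ₁ σ₂ l₁ l₂ l₃ p₁ p₂ t x τ ξ|)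
          ≤ (l₁ + l₂ + l₃) * Real.exp (-(l₁ + l₂ + l₃) * (t - τ))) ∧
    (∀ Ψ : ℝ → ℝ × ℝ → ℝ, Measurable (Function.uncurry Ψ) →
      ∀ M : ℝ, (∀ τ ∈ Set.Icc τ₀ T, ∀ ξ ∈ Set.Ici (0 : ℝ) ×ˢ Set.Ici (0 : ℝ), |Ψ τ ξ| ≤ M) →
      ∀ k : ℕ, 1 ≤ k →
        ∀ τ ∈ Set.Icc τ₀ T, ∀ ξ ∈ Set.Ici (0 : ℝ) ×ˢ Set.Ici (0 : ℝ),
          |(neumannOp C₁ C₂ σ₁ σ₂ l₁ l₂ l₃ T p₁ p₂)^[k] Ψ τ ξ|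
            ≤ (l₁ + l₂ + l₃) ^ k * (T - τ₀) ^ k / (Nat.factorial k) * M) :=
  volterra_bound_general C₁ C₂ σ₁ σ₂ l₁ l₂ l₃ hσ₁ hσ₂ hl₁ hl₂ hl₃ p₁ p₂ hp₁m hp₂m hp₁ hp₂ hp₁int
    hp₂int τ₀ T hτ₀T
end
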